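/- Under Assumption A, there exist τ₀ > 0 and Q > 0, depending only on d, k, L and T, such that for every N ∈ ℕ with τ = T/N ≤ τ₀, the vector-transport output of the constrained discrete HiSD scheme satisfies, for all 1 ≤ i ≤ k and 1 ≤ n ≤ N, ‖v̂_{i,n} − v_{i,n−1} − τ J(x_{n−1}) v_{i,n−1} − τ (v_{i,n−1}ᵀ F(x_{n−1})) x_{n−1} + τ (v_{i,n−1}ᵀ J(x_{n−1})ᵀ x_{n−1}) x_{n−1}‖ ≤ Q τ². -/

import Mathlib

open scoped RealInnerProductSpace BigOperators

noncomputable section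

/-!
Every iterate lies on the constraint manifold: the retraction produces a unit vector, and
Gram–Schmidt applied to vectors projected onto the tangent space of the new point produces an
orthonormal frame in that tangent space. Given this, `S = F - 2 ∑ ⟨vⱼ, F⟩ vⱼ` is `F` with its
component along the frame reversed, so `‖S‖ = ‖F‖ ≤ 2L` and `⟨vᵢ, S⟩ = -⟨vᵢ, F⟩`. With `y = x + τ S`
the projection term is `⟨ṽ, y⟩ y / ‖y‖²`, and since `y ↦ y / ‖y‖²` is the inversion in the unit
sphere, it moves `y` to within `‖y - x‖ / ‖y‖ = τ ‖S‖ / ‖y‖` of `x`; the linear part of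
`⟨ṽ, y⟩` is exactly the first-order correction, leaving an `O(τ²)` remainder.
-/

section

variable {E : Type*} [NormedAddCommGroup E] [InnerProductSpace ℝ E]

theorem inner_sub_two_smul_sum_inner_smul {ι : Type*} [Fintype ι] {v : ι → E}
    (hv : Orthonormal ℝ v) (f : E) (i : ι) :
    ⟪v i, f - (2 : ℝ) • ∑ j, ⟪v j, f⟫ • v j⟫ = -⟪v i, f⟫ := by
  rw [inner_sub_right, real_inner_smul_right, hv.inner_right_fintype]
  ring

theorem norm_sub_two_smul_sum_inner_smul {ι : Type*} [Fintype ι] {v : ι → E}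
    (hv : Orthonormal ℝ v) (f : E) :
    ‖f - (2 : ℝ) • ∑ j, ⟪v j, f⟫ • v j‖ = ‖f‖ := by
  set p := ∑ j, ⟪v j, f⟫ • v j
  have hpp : ⟪p, p⟫ = ⟪f, p⟫ := by
    simp only [p, inner_sum, real_inner_smul_right, hv.inner_left_fintype, real_inner_comm f]
    rfl
  rw [← sq_eq_sq₀ (norm_nonneg _) (norm_nonneg _), ← real_inner_self_eq_norm_sq,
    ← real_inner_self_eq_norm_sq]
  simp only [inner_sub_left, inner_sub_right, real_inner_smul_left, real_inner_smul_right,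
    hpp, real_inner_comm p f]
  ring

theorem norm_inv_norm_sq_smul_sub {x y : E} (hx : ‖x‖ = 1) (hy : y ≠ 0) :
    ‖(1 / ‖y‖) ^ 2 • y - x‖ = ‖y - x‖ / ‖y‖ := by
  have hx0 : x ≠ 0 := norm_ne_zero_iff.mp (by rw [hx]; exact one_ne_zero)
  have := dist_div_norm_sq_smul hy hx0 1
  rw [hx, div_one, one_pow, one_smul, dist_eq_norm, dist_eq_norm] at this
  rw [this]
  field_simp

theorem orthonormal_of_gramSchmidt_step {ι : Type*} [LinearOrder ι] [LocallyFiniteOrderBot ι]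
    [WellFoundedLT ι] {u w : ι → E} {x : E} (hux : ∀ i, ⟪u i, x⟫ = 0)
    (hw : ∀ i, u i - ∑ j ∈ Finset.Iio i, ⟪u i, w j⟫ • w j ≠ 0 ∧
      w i = ‖u i - ∑ j ∈ Finset.Iio i, ⟪u i, w j⟫ • w j‖⁻¹ •
        (u i - ∑ j ∈ Finset.Iio i, ⟪u i, w j⟫ • w j)) :
    Orthonormal ℝ w ∧ ∀ i, ⟪w i, x⟫ = 0 := by
  have key : ∀ i, ⟪w i, x⟫ = 0 ∧ ‖w i‖ = 1 ∧ ∀ j < i, ⟪w j, w i⟫ = 0 := by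
    intro i
    induction i using WellFoundedLT.induction with
    | _ i ih =>
    obtain ⟨hg, hwi⟩ := hw i
    set g := u i - ∑ j ∈ Finset.Iio i, ⟪u i, w j⟫ • w j
    have hgx : ⟪g, x⟫ = 0 := by
      rw [inner_sub_left, sum_inner, hux, Finset.sum_eq_zero fun j hj => by
        rw [real_inner_smul_left, (ih j (Finset.mem_Iio.mp hj)).1, mul_zero]]
      simp
    have hgw : ∀ j < i, ⟪w j, g⟫ = 0 := by
      intro j hj
      rw [inner_sub_right, inner_sum, Finset.sum_eq_single_of_mem j (Finset.mem_Iio.mpr hj)]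
      · rw [real_inner_smul_right, real_inner_self_eq_norm_sq, (ih j hj).2.1, real_inner_comm]
        ring
      · intro j' hj' hne
        have hj'i := Finset.mem_Iio.mp hj'
        rw [real_inner_smul_right, mul_eq_zero]
        right
        rcases hne.lt_or_gt with h | h
        · rw [real_inner_comm]; exact (ih j hj).2.2 j' h
        · exact (ih j' hj'i).2.2 j h
    rw [hwi]
    refine ⟨?_, norm_smul_inv_norm hg, fun j hj => ?_⟩
    · rw [real_inner_smul_left, hgx, mul_zero]
    · rw [real_inner_smul_right, hgw j hj, mul_zero]
  refine ⟨⟨fun i => (key i).2.1, fun i j hij => ?_⟩, fun i => (key i).1⟩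
  rcases hij.lt_or_gt with h | h
  · exact (key j).2.2 i h
  · rw [real_inner_comm]; exact (key i).2.2 j h

theorem frame_of_retraction_gramSchmidt {ι : Type*} [LinearOrder ι] [LocallyFiniteOrderBot ι]
    [WellFoundedLT ι] {y x' : E} {u w : ι → E} (hy : y ≠ 0) (hx' : x' = ‖y‖⁻¹ • y)
    (hw : ∀ i, let vh := u i - ⟪u i, x'⟫ • x'
      let g := vh - ∑ j ∈ Finset.Iio i, ⟪vh, w j⟫ • w j
      g ≠ 0 ∧ w i = ‖g‖⁻¹ • g) :
    ‖x'‖ = 1 ∧ Orthonormal ℝ w ∧ ∀ i, ⟪w i, x'⟫ = 0 := by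
  have hx'1 : ‖x'‖ = 1 := hx' ▸ norm_smul_inv_norm hy
  have htangent : ∀ i, ⟪u i - ⟪u i, x'⟫ • x', x'⟫ = 0 := fun i => by
    rw [inner_sub_left, real_inner_smul_left, real_inner_self_eq_norm_sq, hx'1]
    ring
  exact ⟨hx'1, orthonormal_of_gramSchmidt_step htangent hw⟩

theorem norm_inner_retraction_smul_sub_le {x x' v a s : E} {τ : ℝ} (hx : ‖x‖ = 1)
    (hvx : ⟪v, x⟫ = 0) (hτ : 0 ≤ τ) (hτs : τ * ‖s‖ ≤ 1 / 2)
    (hx' : x' = ‖x + τ • s‖⁻¹ • (x + τ • s)) :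
    ‖⟪v + τ • a, x'⟫ • x' - (τ * (⟪v, s⟫ + ⟪a, x⟫)) • x‖ ≤
      2 * τ ^ 2 * ‖s‖ * (‖v‖ * ‖s‖ + 2 * ‖a‖) := by
  set y := x + τ • s
  have hτs' : ‖τ • s‖ = τ * ‖s‖ := by rw [norm_smul, Real.norm_of_nonneg hτ]
  have hy : 1 / 2 ≤ ‖y‖ := by
    have := norm_le_norm_add_norm_sub' x y
    rw [show x - y = -(τ • s) by simp [y], norm_neg, hτs', hx] at this
    linarith
  have hy0 : y ≠ 0 := norm_pos_iff.mp (by linarith)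
  set c := τ * (⟪v, s⟫ + ⟪a, x⟫)
  have hinner : ⟪v + τ • a, y⟫ = c + τ ^ 2 * ⟪a, s⟫ := by
    simp only [y, c, inner_add_left, inner_add_right, real_inner_smul_left,
      real_inner_smul_right, hvx]
    ring
  have hsplit : ⟪v + τ • a, x'⟫ • x' - c • x =
      c • ((1 / ‖y‖) ^ 2 • y - x) + (τ ^ 2 * ⟪a, s⟫) • ((1 / ‖y‖) ^ 2 • y) := by
    rw [hx', real_inner_smul_right, hinner]
    module
  have hproj : ‖(1 / ‖y‖) ^ 2 • y - x‖ ≤ 2 * (τ * ‖s‖) := by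
    rw [norm_inv_norm_sq_smul_sub hx hy0, show y - x = τ • s by simp [y], hτs',
      div_le_iff₀ (by linarith)]
    nlinarith [mul_nonneg hτ (norm_nonneg s)]
  have hscaled : ‖(1 / ‖y‖) ^ 2 • y‖ ≤ 2 := by
    rw [norm_smul, Real.norm_of_nonneg (by positivity), div_pow, one_pow, sq,
      one_div_mul_eq_div, div_mul_cancel_right₀ (norm_ne_zero_iff.mpr hy0)]
    rw [inv_le_comm₀ (by linarith) two_pos]
    linarith
  have hc : |c| ≤ τ * (‖v‖ * ‖s‖ + ‖a‖) := by
    rw [abs_mul, abs_of_nonneg hτ]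
    gcongr
    refine (abs_add_le _ _).trans (add_le_add (abs_real_inner_le_norm _ _) ?_)
    simpa [hx] using abs_real_inner_le_norm a x
  have has : |τ ^ 2 * ⟪a, s⟫| ≤ τ ^ 2 * (‖a‖ * ‖s‖) := by
    rw [abs_mul, abs_of_nonneg (sq_nonneg τ)]
    gcongr
    exact abs_real_inner_le_norm a s
  rw [hsplit]
  calc _ ≤ |c| * ‖(1 / ‖y‖) ^ 2 • y - x‖ + |τ ^ 2 * ⟪a, s⟫| * ‖(1 / ‖y‖) ^ 2 • y‖ := by
        refine (norm_add_le _ _).trans ?_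
        rw [norm_smul, norm_smul, Real.norm_eq_abs, Real.norm_eq_abs]
    _ ≤ τ * (‖v‖ * ‖s‖ + ‖a‖) * (2 * (τ * ‖s‖)) + τ ^ 2 * (‖a‖ * ‖s‖) * 2 := by
        gcongr
    _ = _ := by ring

end

theorem hisd_stmt13_general
    (d k : ℕ)
    (F : EuclideanSpace ℝ (Fin d) → EuclideanSpace ℝ (Fin d))
    (J : EuclideanSpace ℝ (Fin d) → (EuclideanSpace ℝ (Fin d) →L[ℝ] EuclideanSpace ℝ (Fin d)))
    (L : ℝ) (hL : 0 < L)
    (hLip : ∀ x₁ x₂ : EuclideanSpace ℝ (Fin d), ‖J x₂ - J x₁‖ + ‖F x₂ - F x₁‖ ≤ L * ‖x₂ - x₁‖)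
    (hgrow : ∀ x : EuclideanSpace ℝ (Fin d), ‖F x‖ ≤ L * (1 + ‖x‖))
    (T : ℝ) (hT : 0 < T)
    (x₀ : EuclideanSpace ℝ (Fin d)) (hx₀ : ‖x₀‖ = 1)
    (v₀ : Fin k → EuclideanSpace ℝ (Fin d))
    (hv₀ : ∀ i j : Fin k, ⟪v₀ i, v₀ j⟫ = if i = j then (1:ℝ) else 0)
    (hv₀x : ∀ i : Fin k, ⟪v₀ i, x₀⟫ = 0) :
    ∃ τ₀ > (0:ℝ), ∃ Q > (0:ℝ), ∀ (N : ℕ) (τ : ℝ), 0 < N → τ = T / N → τ ≤ τ₀ →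
      ∀ (x : ℕ → EuclideanSpace ℝ (Fin d)) (v : ℕ → Fin k → EuclideanSpace ℝ (Fin d)),
        x 0 = x₀ → v 0 = v₀ →
        (∀ n < N,
          let xt := x n + τ • (F (x n) - (2:ℝ) • ∑ j, ⟪v n j, F (x n)⟫ • v n j)
          xt ≠ 0 ∧ x (n+1) = ‖xt‖⁻¹ • xt) →
        (∀ n < N, ∀ i : Fin k,
          let vt := v n i + τ • J (x n) (v n i)
          let vh := vt - ⟪vt, x (n+1)⟫ • x (n+1)
          let w := vh - ∑ j ∈ Finset.Iio i, ⟪vh, v (n+1) j⟫ • v (n+1) j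
          w ≠ 0 ∧ v (n+1) i = ‖w‖⁻¹ • w) →
        ∀ n < N, ∀ i : Fin k,
          let vt := v n i + τ • J (x n) (v n i)
          let vh := vt - ⟪vt, x (n+1)⟫ • x (n+1)
          ‖vh - v n i - τ • J (x n) (v n i) -
            (τ * ⟪v n i, F (x n)⟫) • x n +
            (τ * ⟪J (x n) (v n i), x n⟫) • x n‖ ≤ Q * τ^2 := by
  set Mj := ‖J x₀‖ + 2 * L
  refine ⟨1 / (2 * (2 * L)), by positivity, 2 * (2 * L) * (2 * L + 2 * Mj), by positivity, ?_⟩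
  intro N τ _ hτ hτ₀ x v hx0 hv0 hxstep hvstep n hn i
  have frame : ∀ m ≤ N, ‖x m‖ = 1 ∧ Orthonormal ℝ (v m) ∧ ∀ j, ⟪v m j, x m⟫ = 0 := by
    rintro (_ | m) hm
    · rw [hx0, hv0]
      exact ⟨hx₀, orthonormal_iff_ite.mpr hv₀, hv₀x⟩
    · exact frame_of_retraction_gramSchmidt (hxstep m hm).1 (hxstep m hm).2 (hvstep m hm)
  obtain ⟨hxn, hvn, hvxn⟩ := frame n hn.le
  have hF : ‖F (x n)‖ ≤ 2 * L := (hgrow (x n)).trans_eq (by rw [hxn]; ring)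
  have hJ : ‖J (x n)‖ ≤ Mj := by
    have hdist : ‖x n - x₀‖ ≤ 2 := by linarith [norm_sub_le (x n) x₀]
    calc ‖J (x n)‖ ≤ ‖J x₀‖ + ‖J (x n) - J x₀‖ := norm_le_norm_add_norm_sub' _ _
      _ ≤ Mj := by nlinarith [hLip x₀ (x n), norm_nonneg (F (x n) - F x₀)]
  have hJv : ‖J (x n) (v n i)‖ ≤ Mj := by
    simpa [hvn.1 i] using (J (x n)).le_of_opNorm_le hJ (v n i)
  have hτnn : 0 ≤ τ := hτ ▸ div_nonneg hT.le (Nat.cast_nonneg N)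
  have hS := norm_sub_two_smul_sum_inner_smul hvn (F (x n))
  have hτS : τ * ‖F (x n) - (2 : ℝ) • ∑ j, ⟪v n j, F (x n)⟫ • v n j‖ ≤ 1 / 2 := by
    rw [hS]
    calc τ * ‖F (x n)‖ ≤ 1 / (2 * (2 * L)) * (2 * L) := by gcongr
      _ = 1 / 2 := by field_simp
  have hremainder := norm_inner_retraction_smul_sub_le (a := J (x n) (v n i)) hxn (hvxn i)
    hτnn hτS (hxstep n hn).2
  rw [inner_sub_two_smul_sum_inner_smul hvn, hS, hvn.1 i] at hremainder
  intro vt vh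
  calc _ = ‖⟪vt, x (n + 1)⟫ • x (n + 1) -
        (τ * (-⟪v n i, F (x n)⟫ + ⟪J (x n) (v n i), x n⟫)) • x n‖ := by
        rw [← norm_neg]; congr 1; simp only [vh]; module
    _ ≤ 2 * τ ^ 2 * ‖F (x n)‖ * (1 * ‖F (x n)‖ + 2 * ‖J (x n) (v n i)‖) := hremainder
    _ ≤ 2 * τ ^ 2 * (2 * L) * (1 * (2 * L) + 2 * Mj) := by gcongr
    _ = _ := by ring

theorem hisd_stmt13
    (d k : ℕ) (hd : 1 ≤ d) (hk : 1 ≤ k) (hkd : k ≤ d)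
    (F : EuclideanSpace ℝ (Fin d) → EuclideanSpace ℝ (Fin d))
    (J : EuclideanSpace ℝ (Fin d) → (EuclideanSpace ℝ (Fin d) →L[ℝ] EuclideanSpace ℝ (Fin d)))
    (hJsymm : ∀ x u w, ⟪J x u, w⟫ = ⟪u, J x w⟫)
    (L : ℝ) (hL : 0 < L)
    (hLip : ∀ x₁ x₂ : EuclideanSpace ℝ (Fin d), ‖J x₂ - J x₁‖ + ‖F x₂ - F x₁‖ ≤ L * ‖x₂ - x₁‖)
    (hgrow : ∀ x : EuclideanSpace ℝ (Fin d), ‖F x‖ ≤ L * (1 + ‖x‖))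
    (T : ℝ) (hT : 0 < T)
    (x₀ : EuclideanSpace ℝ (Fin d)) (hx₀ : ‖x₀‖ = 1)
    (v₀ : Fin k → EuclideanSpace ℝ (Fin d))
    (hv₀ : ∀ i j : Fin k, ⟪v₀ i, v₀ j⟫ = if i = j then (1:ℝ) else 0)
    (hv₀x : ∀ i : Fin k, ⟪v₀ i, x₀⟫ = 0) :
    ∃ τ₀ > (0:ℝ), ∃ Q > (0:ℝ), ∀ (N : ℕ) (τ : ℝ), 0 < N → τ = T / N → τ ≤ τ₀ →
      ∀ (x : ℕ → EuclideanSpace ℝ (Fin d)) (v : ℕ → Fin k → EuclideanSpace ℝ (Fin d)),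
        x 0 = x₀ → v 0 = v₀ →
        (∀ n < N,
          let xt := x n + τ • (F (x n) - (2:ℝ) • ∑ j, ⟪v n j, F (x n)⟫ • v n j)
          xt ≠ 0 ∧ x (n+1) = ‖xt‖⁻¹ • xt) →
        (∀ n < N, ∀ i : Fin k,
          let vt := v n i + τ • J (x n) (v n i)
          let vh := vt - ⟪vt, x (n+1)⟫ • x (n+1)
          let w := vh - ∑ j ∈ Finset.Iio i, ⟪vh, v (n+1) j⟫ • v (n+1) j
          w ≠ 0 ∧ v (n+1) i = ‖w‖⁻¹ • w) →
        ∀ n < N, ∀ i : Fin k,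
          let vt := v n i + τ • J (x n) (v n i)
          let vh := vt - ⟪vt, x (n+1)⟫ • x (n+1)
          ‖vh - v n i - τ • J (x n) (v n i) -
            (τ * ⟪v n i, F (x n)⟫) • x n +
            (τ * ⟪J (x n) (v n i), x n⟫) • x n‖ ≤ Q * τ^2 :=
  hisd_stmt13_general d k F J L hL hLip hgrow T hT x₀ hx₀ v₀ hv₀ hv₀x
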